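/- Let a rooted tree on {1,…,d} be given, and suppose p : ∏_{i=1}^d [n_i] → ℝ factorizes as a graphical model over the tree, i.e. p(x) = φ(x_{r₀}) · ∏_{k ≠ r₀} ψ_k(x_k, x_{P(k)}) for some functions φ : [n_{r₀}] → ℝ and ψ_k : [n_k] × [n_{P(k)}] → ℝ. Then for every non-root node w, the unfolding matrix p(x_{L(w)∪{w}}; x_{R(w)}) has rank at most min(n_w, n_{P(w)}); in particular, p satisfies the TTNS low-rank condition with bond dimension n := max_k n_k at every edge of the tree. -/

import Mathlib

open scoped Classical

noncomputable section

/-- A rooted tree on the vertex set `Fin d`: a root and a parent map fixing the root,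
such that every vertex reaches the root under iteration of the parent map. -/
structure ParentTree (d : ℕ) where
  root : Fin d
  parent : Fin d → Fin d
  parent_root : parent root = root
  reaches_root : ∀ v : Fin d, ∃ m : ℕ, parent^[m] v = root

namespace ParentTree

variable {d : ℕ}

/-- The children of a node `k`. -/
def children (T : ParentTree d) (k : Fin d) : Set (Fin d) :=
  {w | w ≠ T.root ∧ w ≠ k ∧ T.parent w = k}

/-- The descendants of a node `w` (the "left" set `L(w)`). -/
def desc (T : ParentTree d) (w : Fin d) : Set (Fin d) :=
  {v | v ≠ w ∧ ∃ m : ℕ, 1 ≤ m ∧ T.parent^[m] v = w}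

end ParentTree

/-- The unfolding matrix `p(x_S; x_{Sᶜ})` of a `d`-dimensional tensor `p`. -/
def unfoldMatrix {d : ℕ} {n : Fin d → ℕ} (p : (∀ i, Fin (n i)) → ℝ)
    (S : Set (Fin d)) :
    Matrix ((i : S) → Fin (n i.1)) ((j : (Sᶜ : Set (Fin d))) → Fin (n j.1)) ℝ :=
  Matrix.of fun xS xSc =>
    p fun i => if h : i ∈ S then xS ⟨i, h⟩ else xSc ⟨i, h⟩

/-- The TTNS contraction of a family of cores `G k (β, x_k, α_k)`, where `β` is the
joint index over the children bonds of `k` and `α_k` is the bond of `k` itself. -/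
def ttnsContract {d : ℕ} (T : ParentTree d) (n r : Fin d → ℕ)
    (G : ∀ k : Fin d, ((w : T.children k) → Fin (r w.1)) → Fin (n k) → Fin (r k) → ℝ) :
    (∀ i, Fin (n i)) → ℝ :=
  fun x => ∑ α : (k : Fin d) → Fin (r k), ∏ k : Fin d, G k (fun w => α w.1) (x k) (α k)

/-!
Cutting the edge `w — P w` splits the tree into the subtree `S = L(w) ∪ {w}` and its complement,
and both halves are closed under the parent map except for that one edge. So every factor of `p`
other than `ψ_w` depends only on `x_S` or only on `x_{Sᶜ}`, and the unfolding has entries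
`f(x_S) ψ_w(x_w, x_{P w}) h(x_{Sᶜ})`: it factors through the single index `x_w`, and also through
`x_{P w}`.
-/

namespace Matrix

variable {m n κ R : Type*} [Fintype n] [Fintype κ]

theorem rank_le_card_of_row_eq_smul [CommRing R] [StrongRankCondition R] {M : Matrix m n R}
    (a : m → R) (u : m → κ) (G : κ → n → R) (h : ∀ i, M i = a i • G (u i)) :
    M.rank ≤ Fintype.card κ := by
  have hM : M = (of fun i k => if u i = k then a i else 0) * of G := by
    ext i j
    simp [mul_apply, h]
  rw [hM]
  exact (rank_mul_le_right _ _).trans (rank_le_card_height _)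

theorem rank_le_card_of_entry_eq_mul_mul [Fintype m] {κ' : Type*} [Fintype κ'] [Field R]
    {M : Matrix m n R}
    (a : m → R) (u : m → κ) (g : κ → κ' → R) (v : n → κ') (b : n → R)
    (h : ∀ i j, M i j = a i * g (u i) (v j) * b j) :
    M.rank ≤ Fintype.card κ ∧ M.rank ≤ Fintype.card κ' := by
  refine ⟨rank_le_card_of_row_eq_smul a u (fun k j => g k (v j) * b j) fun i => ?_, ?_⟩
  · ext j; simp [h, mul_assoc]
  · rw [← rank_transpose]
    refine rank_le_card_of_row_eq_smul b v (fun l i => a i * g (u i) l) fun j => ?_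
    ext i; simp [h, mul_comm]

end Matrix

theorem rank_unfoldMatrix_le_min {d : ℕ} {n : Fin d → ℕ} {p : (∀ i, Fin (n i)) → ℝ}
    {S : Set (Fin d)} [DecidablePred (· ∈ S)] {a b : Fin d} (ha : a ∈ S) (hb : b ∉ S)
    {f h : (∀ i, Fin (n i)) → ℝ}
    (hf : DependsOn f S) (hh : DependsOn h Sᶜ) (g : Fin (n a) → Fin (n b) → ℝ)
    (hp : ∀ x, p x = f x * g (x a) (x b) * h x) :
    (unfoldMatrix p S).rank ≤ min (n a) (n b) := by
  obtain ⟨F, rfl⟩ := dependsOn_iff_exists_comp.mp hf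
  obtain ⟨H, rfl⟩ := dependsOn_iff_exists_comp.mp hh
  have hrank := Matrix.rank_le_card_of_entry_eq_mul_mul (M := unfoldMatrix p S)
    F (fun xS => xS ⟨a, ha⟩) g (fun xSc => xSc ⟨b, hb⟩) H fun xS xSc => by
      rw [unfoldMatrix, Matrix.of_apply, hp]
      congr 2
      · exact congrArg F (funext fun i => dif_pos i.2)
      · rw [dif_pos ha, dif_neg hb]
      · exact congrArg H (funext fun j => dif_neg j.2)
  simpa using hrank

namespace ParentTree

variable {d : ℕ} {T : ParentTree d}

theorem eq_root_of_isPeriodicPt {v : Fin d} {m : ℕ} (hm : 0 < m)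
    (h : Function.IsPeriodicPt T.parent m v) : v = T.root := by
  obtain ⟨j, hj⟩ := T.reaches_root v
  calc v = T.parent^[m * j] v := (h.mul_const j).eq.symm
    _ = T.parent^[m * j - j] (T.parent^[j] v) := by
      rw [← Function.iterate_add_apply, Nat.sub_add_cancel (Nat.le_mul_of_pos_left j hm)]
    _ = T.root := by rw [hj, Function.iterate_fixed T.parent_root]

def subtree (T : ParentTree d) (w : Fin d) : Set (Fin d) :=
  T.desc w ∪ {w}

variable {w : Fin d}

theorem mem_subtree {v : Fin d} : v ∈ T.subtree w ↔ ∃ m, T.parent^[m] v = w := by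
  refine ⟨?_, fun ⟨m, hm⟩ => ?_⟩
  · rintro (⟨-, m, -, hm⟩ | rfl)
    exacts [⟨m, hm⟩, ⟨0, rfl⟩]
  · by_cases hvw : v = w
    · exact Or.inr hvw
    · refine Or.inl ⟨hvw, m, Nat.one_le_iff_ne_zero.mpr ?_, hm⟩
      rintro rfl
      exact hvw hm

theorem mem_subtree_self : w ∈ T.subtree w :=
  Or.inr rfl

theorem root_notMem_subtree (hw : w ≠ T.root) : T.root ∉ T.subtree w := by
  rw [mem_subtree]
  rintro ⟨m, hm⟩
  rw [Function.iterate_fixed T.parent_root] at hm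
  exact hw hm.symm

theorem parent_notMem_subtree (hw : w ≠ T.root) : T.parent w ∉ T.subtree w := by
  rw [mem_subtree]
  rintro ⟨m, hm⟩
  refine hw (eq_root_of_isPeriodicPt m.succ_pos ?_)
  rwa [Function.IsPeriodicPt, Function.IsFixedPt, Function.iterate_succ_apply]

theorem parent_mem_subtree_of_mem_desc {k : Fin d} (hk : k ∈ T.desc w) :
    T.parent k ∈ T.subtree w := by
  obtain ⟨-, m, hm, hkw⟩ := hk
  refine mem_subtree.mpr ⟨m - 1, ?_⟩
  rwa [← Function.iterate_succ_apply, Nat.succ_eq_add_one, Nat.sub_add_cancel hm]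

theorem parent_notMem_subtree_of_notMem {k : Fin d} (hk : k ∉ T.subtree w) :
    T.parent k ∉ T.subtree w := by
  rw [mem_subtree] at hk ⊢
  rintro ⟨m, hm⟩
  exact hk ⟨m + 1, hm⟩

theorem prod_ne_root_eq {M : Type*} [CommMonoid M] (hw : w ≠ T.root) (f : Fin d → M) :
    ∏ k ∈ Finset.univ.filter (· ≠ T.root), f k =
      (∏ k ∈ Finset.univ.filter (· ∈ T.desc w), f k) * f w *
        ∏ k ∈ Finset.univ.filter (fun k => k ≠ T.root ∧ k ∉ T.subtree w), f k := by
  have hsub : Finset.univ.filter (fun k => k ≠ T.root ∧ k ∈ T.subtree w) =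
      insert w (Finset.univ.filter (· ∈ T.desc w)) := by
    ext k
    have hroot := root_notMem_subtree (T := T) hw
    simp only [Finset.mem_filter, Finset.mem_univ, true_and, Finset.mem_insert]
    constructor
    · rintro ⟨-, hk | hk⟩
      exacts [Or.inr hk, Or.inl hk]
    · rintro (rfl | hk)
      exacts [⟨hw, mem_subtree_self⟩, ⟨fun h => hroot (h ▸ Or.inl hk), Or.inl hk⟩]
  have hw_desc : w ∉ Finset.univ.filter (· ∈ T.desc w) := fun h =>
    (Finset.mem_filter.mp h).2.1 rfl
  rw [← Finset.prod_filter_mul_prod_filter_not _ (· ∈ T.subtree w), Finset.filter_filter,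
    Finset.filter_filter, hsub, Finset.prod_insert hw_desc, mul_comm (f w)]

theorem dependsOn_prod_edge {n : Fin d → ℕ} {S : Set (Fin d)} {q : Fin d → Prop}
    [DecidablePred q] (hS : ∀ k, q k → k ∈ S) (hP : ∀ k, q k → T.parent k ∈ S)
    (ψ : ∀ k, Fin (n k) → Fin (n (T.parent k)) → ℝ) :
    DependsOn (fun x : ∀ i, Fin (n i) =>
      ∏ k ∈ Finset.univ.filter q, ψ k (x k) (x (T.parent k))) S :=
  fun x y hxy => Finset.prod_congr rfl fun k hk => by
    have hk : q k := (Finset.mem_filter.mp hk).2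
    rw [hxy k (hS k hk), hxy _ (hP k hk)]

end ParentTree

theorem tree_graphical_model_unfolding_rank_general {d : ℕ} (T : ParentTree d) (n : Fin d → ℕ)
    (p : (∀ i, Fin (n i)) → ℝ)
    (φ : Fin (n T.root) → ℝ)
    (ψ : ∀ k : Fin d, Fin (n k) → Fin (n (T.parent k)) → ℝ)
    (hp : ∀ x, p x = φ (x T.root) *
      ∏ k ∈ Finset.univ.filter (fun k => k ≠ T.root), ψ k (x k) (x (T.parent k))) :
    ∀ w : Fin d, w ≠ T.root →
      (unfoldMatrix p (T.desc w ∪ {w})).rank ≤ min (n w) (n (T.parent w)) ∧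
      (unfoldMatrix p (T.desc w ∪ {w})).rank ≤ Finset.univ.sup n := by
  intro w hw
  have hinside := ParentTree.dependsOn_prod_edge (S := T.subtree w) (fun _ => Or.inl)
    (fun _ => ParentTree.parent_mem_subtree_of_mem_desc) ψ
  have houtside := ParentTree.dependsOn_prod_edge (q := fun k => k ≠ T.root ∧ k ∉ T.subtree w)
    (fun _ hk => hk.2) (fun _ hk => ParentTree.parent_notMem_subtree_of_notMem hk.2) ψ
  have hrank : (unfoldMatrix p (T.desc w ∪ {w})).rank ≤ min (n w) (n (T.parent w)) := by
    refine rank_unfoldMatrix_le_min ParentTree.mem_subtree_self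
      (ParentTree.parent_notMem_subtree hw) hinside (h := fun x => φ (x T.root) *
        ∏ k ∈ Finset.univ.filter (fun k => k ≠ T.root ∧ k ∉ T.subtree w),
          ψ k (x k) (x (T.parent k)))
      (fun x y hxy => ?_) (ψ w) fun x => ?_
    · beta_reduce
      rw [hxy _ (ParentTree.root_notMem_subtree hw)]
      exact congrArg _ (houtside hxy)
    · rw [hp, ParentTree.prod_ne_root_eq hw]
      ring
  exact ⟨hrank, hrank.trans <| (min_le_left _ _).trans (Finset.le_sup (Finset.mem_univ w))⟩

/-- a graphical model over a rooted tree has unfolding rank at most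
`min (n w) (n (P w))` along every edge; in particular its unfolding rank at every
edge is at most `n := max_k n_k`. -/
theorem tree_graphical_model_unfolding_rank {d : ℕ} (T : ParentTree d) (n : Fin d → ℕ)
    (hn : ∀ k, 1 ≤ n k)
    (p : (∀ i, Fin (n i)) → ℝ)
    (φ : Fin (n T.root) → ℝ)
    (ψ : ∀ k : Fin d, Fin (n k) → Fin (n (T.parent k)) → ℝ)
    (hp : ∀ x, p x = φ (x T.root) *
      ∏ k ∈ Finset.univ.filter (fun k => k ≠ T.root), ψ k (x k) (x (T.parent k))) :
    ∀ w : Fin d, w ≠ T.root →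
      (unfoldMatrix p (T.desc w ∪ {w})).rank ≤ min (n w) (n (T.parent w)) ∧
      (unfoldMatrix p (T.desc w ∪ {w})).rank ≤ Finset.univ.sup n :=
  tree_graphical_model_unfolding_rank_general T n p φ ψ hp
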